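/- Let P be a polytope with vertices v and w such that the segment [v,w] is an edge of P (a one-dimensional face cut out by an objective c), and let c' be such that w is the unique minimizer of ⟨c', ·⟩ over P. Then for all sufficiently small δ > 0, the vector d = c + δ c' satisfies ⟨d, w⟩ < ⟨d, v⟩ < ⟨d, z⟩ for every vertex z of P with z ∉ {v, w}. -/

import Mathlib

open Matrix

/-- The polyhedron `{x : A x ≥ b}`. -/
def PolyhedronOf {m n : ℕ} (A : Matrix (Fin m) (Fin n) ℝ) (b : Fin m → ℝ) :
    Set (Fin n → ℝ) :=
  {x | ∀ i, b i ≤ A.mulVec x i}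

/-- `v` is a vertex of `P`: a zero-dimensional face. -/
def IsVertex {n : ℕ} (P : Set (Fin n → ℝ)) (v : Fin n → ℝ) : Prop :=
  ∃ c : Fin n → ℝ, {x ∈ P | ∀ y ∈ P, c ⬝ᵥ x ≤ c ⬝ᵥ y} = {v}

/-!
A vertex is an extreme point, and an extreme point `z` of `{x | A x ≥ b}` is determined by its
tight constraints: along any direction `d` with `(A d)ᵢ = 0` on them, `z ± s d` stays in the
polyhedron for small `s`. Hence there are finitely many vertices. A vertex `z ∉ {v, w}` cannot
lie on the face `[v, w]` cut out by `c`, so `⟨c, v⟩ < ⟨c, z⟩`, and these finitely many strict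
gaps survive a small perturbation of `c`. Finally `⟨c, v⟩ = ⟨c, w⟩` and `⟨c', w⟩ < ⟨c', v⟩`
put `w` strictly ahead of `v` for every `δ > 0`.
-/

open Topology

section Minimizers

variable {ι : Type*} [Fintype ι] {P : Set (ι → ℝ)} {c z : ι → ℝ}

theorem mem_and_dotProduct_lt_of_minimizers_eq_singleton
    (h : {x ∈ P | ∀ y ∈ P, c ⬝ᵥ x ≤ c ⬝ᵥ y} = {z}) :
    z ∈ P ∧ ∀ y ∈ P, y ≠ z → c ⬝ᵥ z < c ⬝ᵥ y := by
  have hz : z ∈ {x ∈ P | ∀ y ∈ P, c ⬝ᵥ x ≤ c ⬝ᵥ y} := h ▸ rfl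
  refine ⟨hz.1, fun y hy hyz => (hz.2 y hy).lt_of_ne fun hzy => hyz ?_⟩
  have hy' : y ∈ {x ∈ P | ∀ y ∈ P, c ⬝ᵥ x ≤ c ⬝ᵥ y} := ⟨hy, fun x hx => hzy ▸ hz.2 x hx⟩
  exact Set.mem_singleton_iff.1 (h ▸ hy')

theorem dotProduct_lt_of_minimizers_eq_segment {v w : ι → ℝ}
    (h : {x ∈ P | ∀ y ∈ P, c ⬝ᵥ x ≤ c ⬝ᵥ y} = segment ℝ v w)
    (hz : z ∈ P.extremePoints ℝ) (hzv : z ≠ v) (hzw : z ≠ w) : c ⬝ᵥ v < c ⬝ᵥ z := by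
  have hv : v ∈ {x ∈ P | ∀ y ∈ P, c ⬝ᵥ x ≤ c ⬝ᵥ y} := h ▸ left_mem_segment ℝ v w
  have hw : w ∈ {x ∈ P | ∀ y ∈ P, c ⬝ᵥ x ≤ c ⬝ᵥ y} := h ▸ right_mem_segment ℝ v w
  have hzP := extremePoints_subset hz
  refine (hv.2 z hzP).lt_of_ne fun hcz => ?_
  have hzvw : z ∈ segment ℝ v w := h ▸ ⟨hzP, fun y hy => hcz ▸ hv.2 y hy⟩
  rcases (mem_extremePoints_iff_forall_segment.1 hz).2 v hv.1 w hw.1 hzvw with h | h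
  exacts [hzv h.symm, hzw h.symm]

theorem eventually_add_smul_dotProduct_lt {x y : ι → ℝ} (h : c ⬝ᵥ x < c ⬝ᵥ y) (c' : ι → ℝ) :
    ∀ᶠ δ in 𝓝 (0 : ℝ), (c + δ • c') ⬝ᵥ x < (c + δ • c') ⬝ᵥ y := by
  simp only [add_dotProduct, smul_dotProduct, smul_eq_mul]
  exact ContinuousAt.eventually_lt (by fun_prop) (by fun_prop) (by simpa using h)

end Minimizers

theorem IsVertex.mem_extremePoints {n : ℕ} {P : Set (Fin n → ℝ)} {z : Fin n → ℝ}
    (hz : IsVertex P z) : z ∈ P.extremePoints ℝ := by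
  obtain ⟨c, hc⟩ := hz
  obtain ⟨hzP, hlt⟩ := mem_and_dotProduct_lt_of_minimizers_eq_singleton hc
  refine mem_extremePoints_iff_forall_segment.2 ⟨hzP, fun x₁ h₁ x₂ h₂ hz => ?_⟩
  by_contra! hne
  obtain ⟨a, b, ha, hb, hab, rfl⟩ := hz
  obtain rfl : b = 1 - a := by linarith
  have h₁ := hlt x₁ h₁ hne.1
  have h₂ := hlt x₂ h₂ hne.2
  simp only [dotProduct_add, dotProduct_smul, smul_eq_mul] at h₁ h₂
  rcases le_total (c ⬝ᵥ x₁) (c ⬝ᵥ x₂) with h | h <;>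
    nlinarith [mul_nonneg ha (sub_nonneg.2 h), mul_nonneg hb (sub_nonneg.2 h)]

theorem eq_zero_of_mem_extremePoints_of_eventually_add_smul_mem {E : Type*} [AddCommGroup E]
    [Module ℝ E] {A : Set E} {x d : E} (hx : x ∈ A.extremePoints ℝ)
    (hd : ∀ᶠ s in 𝓝 (0 : ℝ), x + s • d ∈ A) : d = 0 := by
  obtain ⟨ε, hε, hball⟩ := Metric.eventually_nhds_iff.1 hd
  have hpos : x + (ε / 2) • d ∈ A := hball (by simp [abs_of_pos hε, hε])
  have hneg : x + (-(ε / 2)) • d ∈ A := hball (by simp [abs_of_pos hε, hε])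
  have hmid : x ∈ openSegment ℝ (x + (-(ε / 2)) • d) (x + (ε / 2) • d) :=
    ⟨1 / 2, 1 / 2, by norm_num, by norm_num, by norm_num, by module⟩
  have hx' := ((mem_extremePoints.1 hx).2 _ hneg _ hpos hmid).2
  simpa [hε.ne'] using hx'

section Polyhedron

variable {m n : ℕ} {A : Matrix (Fin m) (Fin n) ℝ} {b : Fin m → ℝ}

theorem eventually_add_smul_mem_polyhedronOf {z d : Fin n → ℝ} (hz : z ∈ PolyhedronOf A b)
    (hd : ∀ i, (A *ᵥ z) i = b i → (A *ᵥ d) i = 0) :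
    ∀ᶠ s in 𝓝 (0 : ℝ), z + s • d ∈ PolyhedronOf A b := by
  simp only [PolyhedronOf, Set.mem_ofPred_eq, mulVec_add, mulVec_smul, Pi.add_apply,
    Pi.smul_apply, smul_eq_mul, Filter.eventually_all]
  intro i
  rcases (hz i).eq_or_lt with hi | hi
  · filter_upwards with s
    simp [hd i hi.symm, hi]
  · exact (continuousAt_const.eventually_lt (by fun_prop) (by simpa using hi)).mono
      fun _ => le_of_lt

theorem eq_of_mem_extremePoints_polyhedronOf_of_tight {z z' : Fin n → ℝ}
    (hz : z ∈ (PolyhedronOf A b).extremePoints ℝ)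
    (htight : ∀ i, (A *ᵥ z) i = b i → (A *ᵥ z') i = b i) : z' = z := by
  have hd : ∀ i, (A *ᵥ z) i = b i → (A *ᵥ (z' - z)) i = 0 := fun i hi => by
    simp [mulVec_sub, hi, htight i hi]
  exact sub_eq_zero.1 <| eq_zero_of_mem_extremePoints_of_eventually_add_smul_mem hz <|
    eventually_add_smul_mem_polyhedronOf (extremePoints_subset hz) hd

variable (A b) in
theorem finite_setOf_isVertex_polyhedronOf : {z | IsVertex (PolyhedronOf A b) z}.Finite := by
  refine Set.Finite.of_finite_image (f := fun z => {i | (A *ᵥ z) i = b i}) (Set.toFinite _) ?_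
  intro z hz z' _ hzz'
  exact (eq_of_mem_extremePoints_polyhedronOf_of_tight (IsVertex.mem_extremePoints hz)
    fun i => (Set.ext_iff.1 hzz' i).1).symm

end Polyhedron

theorem stmt11_general {m n : ℕ} (A : Matrix (Fin m) (Fin n) ℝ) (b : Fin m → ℝ)
    (v w : Fin n → ℝ) (hvw : v ≠ w) (c c' : Fin n → ℝ)
    -- the segment `[v, w]` is the face of `P` cut out by the objective `c`:
    (hedge : {x ∈ PolyhedronOf A b | ∀ y ∈ PolyhedronOf A b, c ⬝ᵥ x ≤ c ⬝ᵥ y}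
      = segment ℝ v w)
    -- `w` is the unique minimizer of `⟨c', ·⟩` over `P`:
    (hw : {x ∈ PolyhedronOf A b | ∀ y ∈ PolyhedronOf A b, c' ⬝ᵥ x ≤ c' ⬝ᵥ y} = {w}) :
    ∃ δ₀ > (0 : ℝ), ∀ δ : ℝ, 0 < δ → δ ≤ δ₀ →
      (c + δ • c') ⬝ᵥ w < (c + δ • c') ⬝ᵥ v ∧
      ∀ z, IsVertex (PolyhedronOf A b) z → z ≠ v → z ≠ w →
        (c + δ • c') ⬝ᵥ v < (c + δ • c') ⬝ᵥ z := by
  set P := PolyhedronOf A b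
  have hv : v ∈ {x ∈ P | ∀ y ∈ P, c ⬝ᵥ x ≤ c ⬝ᵥ y} := hedge ▸ left_mem_segment ℝ v w
  have hw' : w ∈ {x ∈ P | ∀ y ∈ P, c ⬝ᵥ x ≤ c ⬝ᵥ y} := hedge ▸ right_mem_segment ℝ v w
  have hcvw : c ⬝ᵥ v = c ⬝ᵥ w := le_antisymm (hv.2 w hw'.1) (hw'.2 v hv.1)
  have hc'wv : c' ⬝ᵥ w < c' ⬝ᵥ v :=
    (mem_and_dotProduct_lt_of_minimizers_eq_singleton hw).2 v hv.1 hvw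
  have hgap : ∀ z ∈ {z | IsVertex P z ∧ z ≠ v ∧ z ≠ w},
      ∀ᶠ δ in 𝓝 (0 : ℝ), (c + δ • c') ⬝ᵥ v < (c + δ • c') ⬝ᵥ z :=
    fun z ⟨hz, hzv, hzw⟩ => eventually_add_smul_dotProduct_lt
      (dotProduct_lt_of_minimizers_eq_segment hedge hz.mem_extremePoints hzv hzw) c'
  have hall := ((finite_setOf_isVertex_polyhedronOf A b).subset
    fun z hz => hz.1).eventually_all.2 hgap
  obtain ⟨δ₀, hδ₀, hsub⟩ := mem_nhdsGT_iff_exists_Ioc_subset.1 (nhdsWithin_le_nhds hall)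
  refine ⟨δ₀, hδ₀, fun δ hδ hδδ₀ => ⟨?_, fun z hz hzv hzw => hsub ⟨hδ, hδδ₀⟩ z ⟨hz, hzv, hzw⟩⟩⟩
  simp only [add_dotProduct, smul_dotProduct, smul_eq_mul, hcvw]
  gcongr

/-- Perturbing the objective cutting out an edge `[v, w]` by a small multiple of an
objective uniquely minimized at `w` makes `w` the best vertex and `v` the second
best. -/
theorem stmt11 {m n : ℕ} (A : Matrix (Fin m) (Fin n) ℝ) (b : Fin m → ℝ)
    (hbounded : ∃ R : ℝ, ∀ x ∈ PolyhedronOf A b, ∀ j, |x j| ≤ R)  -- `P` is a polytope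
    (v w : Fin n → ℝ) (hvw : v ≠ w) (c c' : Fin n → ℝ)
    -- the segment `[v, w]` is the face of `P` cut out by the objective `c`:
    (hedge : {x ∈ PolyhedronOf A b | ∀ y ∈ PolyhedronOf A b, c ⬝ᵥ x ≤ c ⬝ᵥ y}
      = segment ℝ v w)
    -- `w` is the unique minimizer of `⟨c', ·⟩` over `P`:
    (hw : {x ∈ PolyhedronOf A b | ∀ y ∈ PolyhedronOf A b, c' ⬝ᵥ x ≤ c' ⬝ᵥ y} = {w}) :
    ∃ δ₀ > (0 : ℝ), ∀ δ : ℝ, 0 < δ → δ ≤ δ₀ →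
      (c + δ • c') ⬝ᵥ w < (c + δ • c') ⬝ᵥ v ∧
      ∀ z, IsVertex (PolyhedronOf A b) z → z ≠ v → z ≠ w →
        (c + δ • c') ⬝ᵥ v < (c + δ • c') ⬝ᵥ z :=
  stmt11_general A b v w hvw c c' hedge hw
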